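/- Work in A = ℂ[y₁,…,yₙ,x₁,…,x_p] with polynomials f₂,…,f_s ∈ A containing y_i² − y_i for every i. Let m be a positive natural number and set f₁ = (∑_{i=1}^n y_i) − m. Assume that: the system f₁ = 0, f₂ = 0, …, f_s = 0 has no common zero in ℂ^{n+p}; the system f₂ = 0,…,f_s = 0 is subset closed; and the quotient ring A/⟨f₂,…,f_s⟩ is Artinian. Then there exist polynomials β₁,…,β_s ∈ A with ∑_{i=1}^s β_i·f_i = 1 such that the monomials appearing with nonzero coefficient in β₁ are precisely the squarefree monomials y_b = ∏_{i : b_i = 1} y_i for b ∈ B. -/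

import Mathlib

/-!
Modulo `I = ⟨f₂,…,f_s⟩` the `yᵢ` are idempotents. If `c ∉ B` then `y_c` vanishes on `V`: a
point of `V` lies over some `d ∈ B`, and `c ⊄ d` by subset closedness. By the Nullstellensatz
`y_c` is nilpotent mod `I`, hence `y_c ≡ 0`. This applies in particular when `|c| = m`, since
`f₁` has no zero on `V`.

Since `y_b · ∑ yᵢ ≡ |b| y_b + ∑_{i ∉ b} y_{b ∪ {i}}`, for `β₁ = ∑_b γ_{|b|} y_b` the coefficient
of `y_b` in `β₁ f₁` is `(|b| - m) γ_{|b|} + |b| γ_{|b|-1}`. The recursion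
`γ₀ = -1/m`, `γ_{k+1} = (k+1) γ_k / (m - k - 1)` makes it `1` for `b = ∅` and `0` otherwise,
so `β₁ f₁ ≡ 1`. Subset closedness also forces `|b| < m` on `B`, where `γ_{|b|} ≠ 0`, so the
support of `β₁` is exactly `{y_b : b ∈ B}`.
-/

open MvPolynomial

/-- The `y`-coordinate indicator condition: the vector `χ_d ∈ {0,1}ⁿ` (with
support `d`) arises as the `y`-coordinates of a common zero of the `f j`. -/
def InB (n p s : ℕ) (f : Fin s → MvPolynomial (Fin n ⊕ Fin p) ℂ)
    (d : Finset (Fin n)) : Prop :=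
  ∃ z : (Fin n ⊕ Fin p) → ℂ, (∀ j : Fin s, eval z (f j) = 0) ∧
    ∀ i : Fin n, z (Sum.inl i) = if i ∈ d then 1 else 0

def SubsetClosed (n p s : ℕ) (f : Fin s → MvPolynomial (Fin n ⊕ Fin p) ℂ) : Prop :=
  (∃ z : (Fin n ⊕ Fin p) → ℂ, (∀ j : Fin s, eval z (f j) = 0) ∧
      ∀ i : Fin n, z (Sum.inl i) = 0) ∧
  ∀ I : Finset (Fin n), InB n p s f I → ∀ J ⊆ I, InB n p s f J

open Finset

/-- For `m : ℕ` this is `-1 / ((m - k) * m.choose k)` when `k < m`, and `0` when `k ≥ m`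
(the factor `1 / (m - m)` is `0`). -/
noncomputable def certCoeff {K : Type*} [Field K] (m : K) : ℕ → K
  | 0 => -m⁻¹
  | k + 1 => (k + 1) * certCoeff m k / (m - (k + 1))

section

variable {K : Type*} [Field K]

theorem certCoeff_recurrence {m : K} {k : ℕ} (hk : (k : K) ≠ m) :
    ((k : K) - m) * certCoeff m k + k * certCoeff m (k - 1) = if k = 0 then 1 else 0 := by
  cases k with
  | zero =>
    have hm : m ≠ 0 := by simpa [eq_comm] using hk
    simp [certCoeff, hm]
  | succ k =>
    have hk' : m - (k + 1) ≠ 0 := sub_ne_zero.2 (by simpa [eq_comm] using hk)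
    simp only [certCoeff, Nat.cast_succ, add_tsub_cancel_right, if_neg k.succ_ne_zero]
    field_simp
    ring

theorem certCoeff_ne_zero_iff [CharZero K] {m k : ℕ} : certCoeff (m : K) k ≠ 0 ↔ k < m := by
  induction k with
  | zero => simp [certCoeff, Nat.pos_iff_ne_zero]
  | succ k ih =>
    simp only [certCoeff, ne_eq, div_eq_zero_iff, mul_eq_zero, not_or, sub_eq_zero]
    norm_cast
    rw [ne_eq] at ih
    simp only [not_false_eq_true, true_and, ih]
    omega

end

section

theorem isIdempotentElem_prod {ι M : Type*} [CommMonoid M] {y : ι → M}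
    (hy : ∀ i, IsIdempotentElem (y i)) (b : Finset ι) : IsIdempotentElem (∏ i ∈ b, y i) :=
  prod_induction _ _ (fun _ _ ha hb => ha.mul hb) .one fun i _ => hy i

variable {ι Q : Type*} [Fintype ι] [DecidableEq ι] [CommRing Q] {y : ι → Q}

theorem prod_mul_sum_of_isIdempotentElem (hy : ∀ i, IsIdempotentElem (y i)) (b : Finset ι) :
    (∏ i ∈ b, y i) * ∑ i, y i = #b • ∏ i ∈ b, y i + ∑ i ∈ bᶜ, ∏ j ∈ insert i b, y j := by
  rw [mul_sum, ← sum_add_sum_compl b]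
  congr 1
  · rw [← sum_const]
    refine sum_congr rfl fun i hi => ?_
    rw [← mul_prod_erase b y hi, mul_right_comm, (hy i).eq]
  · exact sum_congr rfl fun i hi => by rw [prod_insert (by simpa using hi), mul_comm]

theorem sum_sum_compl_insert {M : Type*} [AddCommMonoid M] (F : Finset ι → Finset ι → M) :
    ∑ b : Finset ι, ∑ i ∈ bᶜ, F b (insert i b) = ∑ d : Finset ι, ∑ i ∈ d, F (d.erase i) d := by
  rw [sum_sigma', sum_sigma']
  refine sum_nbij' (fun x => ⟨insert x.2 x.1, x.2⟩) (fun x => ⟨x.1.erase x.2, x.2⟩)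
    ?_ ?_ ?_ ?_ ?_ <;> rintro ⟨b, i⟩ <;> simp +contextual

theorem sum_certCoeff_smul_prod_mul_eq_one {K : Type*} [Field K] [Algebra K Q]
    (hy : ∀ i, IsIdempotentElem (y i)) (m : K)
    (hm : ∀ b : Finset ι, (#b : K) = m → ∏ i ∈ b, y i = 0) :
    (∑ b : Finset ι, certCoeff m #b • ∏ i ∈ b, y i) * (∑ i, y i - algebraMap K Q m) = 1 := by
  calc _ = ∑ b : Finset ι, (((#b : K) - m) * certCoeff m #b) • ∏ i ∈ b, y i
        + ∑ b : Finset ι, ∑ i ∈ bᶜ, certCoeff m #b • ∏ j ∈ insert i b, y j := by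
        rw [sum_mul, ← sum_add_distrib]
        refine sum_congr rfl fun b _ => ?_
        rw [mul_sub, smul_mul_assoc, prod_mul_sum_of_isIdempotentElem hy, smul_add, ← smul_sum,
          nsmul_eq_mul]
        simp only [Algebra.smul_def, map_mul, map_sub, map_natCast]
        ring
    _ = ∑ d : Finset ι,
          (((#d : K) - m) * certCoeff m #d + #d * certCoeff m (#d - 1)) • ∏ i ∈ d, y i := by
        rw [sum_sum_compl_insert (fun b d => certCoeff m #b • ∏ j ∈ d, y j), ← sum_add_distrib]
        refine sum_congr rfl fun d _ => ?_
        rw [sum_congr rfl fun i hi => by rw [card_erase_of_mem hi], sum_const]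
        simp only [add_smul, mul_smul, Nat.cast_smul_eq_nsmul]
    _ = ∑ d : Finset ι, (if #d = 0 then 1 else 0 : K) • ∏ i ∈ d, y i := by
        refine sum_congr rfl fun d _ => ?_
        by_cases hd : (#d : K) = m
        · simp [hm d hd]
        · rw [certCoeff_recurrence hd]
    _ = 1 := by simp

end

theorem mem_support_sum_monomial_iff {R σ α : Type*} [CommSemiring R] {s : Finset α}
    {e : α → σ →₀ ℕ} (he : Set.InjOn e s) {c : α → R} (hc : ∀ a ∈ s, c a ≠ 0) (d : σ →₀ ℕ) :
    d ∈ (∑ a ∈ s, monomial (e a) (c a)).support ↔ ∃ a ∈ s, d = e a := by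
  classical
  simp only [mem_support_iff, coeff_sum, coeff_monomial]
  constructor
  · intro h
    obtain ⟨a, ha, hne⟩ := exists_ne_zero_of_sum_ne_zero h
    exact ⟨a, ha, (ite_ne_right_iff.1 hne).1.symm⟩
  · rintro ⟨a, ha, rfl⟩
    rw [sum_eq_single_of_mem a ha fun b hb hba => if_neg fun h => hba (he hb ha h), if_pos rfl]
    exact hc a ha

theorem sum_single_one_injective {α σ : Type*} {g : α → σ} (hg : Function.Injective g) :
    Function.Injective fun b : Finset α => ∑ i ∈ b, Finsupp.single (g i) 1 := by
  classical
  intro b b' h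
  ext i
  have := congrArg (· (g i)) h
  simp only [Finsupp.finsetSum_apply, Finsupp.single_apply, hg.eq_iff, sum_ite_eq'] at this
  by_cases hb : i ∈ b <;> by_cases hb' : i ∈ b' <;> simp_all

theorem aeval_monomial_sum_single {R σ α S : Type*} [CommSemiring R] [CommSemiring S] [Algebra R S]
    (φ : MvPolynomial σ R →ₐ[R] S) (g : α → σ) (b : Finset α) (c : R) :
    φ (monomial (∑ i ∈ b, Finsupp.single (g i) 1) c) = c • ∏ i ∈ b, φ (X (g i)) := by
  rw [show monomial _ c = c • monomial _ 1 by rw [smul_monomial, smul_eq_mul, mul_one],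
    map_smul, monomial_sum_one, map_prod]
  rfl

section IndicatorSystem

variable {n p s : ℕ} {f : Fin s → MvPolynomial (Fin n ⊕ Fin p) ℂ} {m : ℕ}
  (hind : ∀ i : Fin n, ∃ j : Fin s, f j = (X (Sum.inl i)) ^ 2 - X (Sum.inl i))
  (hdown : ∀ I : Finset (Fin n), InB n p s f I → ∀ J ⊆ I, InB n p s f J)
  (hinf : ¬ ∃ z : (Fin n ⊕ Fin p) → ℂ,
    eval z ((∑ i : Fin n, X (Sum.inl i)) - (m : MvPolynomial (Fin n ⊕ Fin p) ℂ)) = 0 ∧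
      ∀ j : Fin s, eval z (f j) = 0)

local notation "π" => Ideal.Quotient.mkₐ ℂ (Ideal.span (Set.range f))

include hind in
theorem isIdempotentElem_mkₐ_X (i : Fin n) : IsIdempotentElem (π (X (Sum.inl i))) := by
  obtain ⟨j, hj⟩ := hind i
  rw [IsIdempotentElem, ← map_mul, ← sub_eq_zero, ← map_sub, Ideal.Quotient.mkₐ_eq_mk,
    Ideal.Quotient.eq_zero_iff_mem, ← sq, ← hj]
  exact Ideal.subset_span ⟨j, rfl⟩

include hind in
theorem eval_inl_eq_zero_or_one {z : (Fin n ⊕ Fin p) → ℂ} (hz : ∀ j : Fin s, eval z (f j) = 0)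
    (i : Fin n) : z (Sum.inl i) = 0 ∨ z (Sum.inl i) = 1 := by
  obtain ⟨j, hj⟩ := hind i
  have h := hz j
  rw [hj] at h
  simp only [map_sub, map_pow, eval_X] at h
  have : z (Sum.inl i) * (z (Sum.inl i) - 1) = 0 := by linear_combination h
  simpa [sub_eq_zero] using this

include hind hdown in
theorem mkₐ_prod_X_eq_zero_of_not_inB {c : Finset (Fin n)} (hc : ¬ InB n p s f c) :
    ∏ i ∈ c, π (X (Sum.inl i)) = 0 := by
  have hvanish : ∏ i ∈ c, X (Sum.inl i) ∈
      vanishingIdeal ℂ (zeroLocus ℂ (Ideal.span (Set.range f))) := by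
    rw [mem_vanishingIdeal_iff, zeroLocus_span]
    intro z hz
    simp only [Set.mem_ofPred_eq, Set.forall_mem_range] at hz
    classical
    have hzB : InB n p s f {i | z (Sum.inl i) = 1} :=
      ⟨z, hz, fun i => by rcases eval_inl_eq_zero_or_one hind hz i with h | h <;> simp [h]⟩
    obtain ⟨i, hic, hiz⟩ : ∃ i ∈ c, z (Sum.inl i) ≠ 1 := by
      by_contra! h
      exact hc (hdown _ hzB c fun i hi => by simp [h i hi])
    rw [map_prod]
    exact prod_eq_zero hic (by simpa using (eval_inl_eq_zero_or_one hind hz i).resolve_right hiz)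
  rw [vanishingIdeal_zeroLocus_eq_radical] at hvanish
  obtain ⟨k, hk⟩ := hvanish
  refine eq_of_isNilpotent_sub_of_isIdempotentElem
    (isIdempotentElem_prod (isIdempotentElem_mkₐ_X hind) c) .zero ⟨k, ?_⟩
  rw [sub_zero, ← map_prod, ← map_pow, Ideal.Quotient.mkₐ_eq_mk, Ideal.Quotient.eq_zero_iff_mem]
  exact hk

include hinf in
theorem not_inB_of_card_eq {b : Finset (Fin n)} (hb : #b = m) : ¬ InB n p s f b := by
  rintro ⟨z, hz, hzb⟩
  exact hinf ⟨z, by simp [hzb, hb], hz⟩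

include hdown hinf in
theorem card_lt_of_inB {b : Finset (Fin n)} (hb : InB n p s f b) : #b < m := by
  by_contra! h
  obtain ⟨c, hcb, hc⟩ := exists_subset_card_eq h
  exact not_inB_of_card_eq hinf hc (hdown b hb c hcb)

include hind hdown hinf in
theorem mkₐ_sum_monomial_certCoeff_mul_eq_one [DecidablePred (InB n p s f)] :
    π ((∑ b with InB n p s f b,
        monomial (∑ i ∈ b, Finsupp.single (Sum.inl i) 1) (certCoeff (m : ℂ) #b)) *
      ((∑ i : Fin n, X (Sum.inl i)) - (m : MvPolynomial (Fin n ⊕ Fin p) ℂ))) = 1 := by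
  have hzero {c : Finset (Fin n)} (hc : ¬ InB n p s f c) : ∏ i ∈ c, π (X (Sum.inl i)) = 0 :=
    mkₐ_prod_X_eq_zero_of_not_inB hind hdown hc
  rw [map_mul, map_sum, map_sub, map_sum, map_natCast]
  simp only [aeval_monomial_sum_single]
  rw [sum_filter_of_ne fun b _ hb => by_contra fun hB => hb (by rw [hzero hB, smul_zero]),
    ← map_natCast (algebraMap ℂ _)]
  refine sum_certCoeff_smul_prod_mul_eq_one (isIdempotentElem_mkₐ_X hind) _ fun b hb => ?_
  exact hzero (not_inB_of_card_eq hinf (Nat.cast_injective hb))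

end IndicatorSystem

theorem stmt6_general (n p s : ℕ) (f : Fin s → MvPolynomial (Fin n ⊕ Fin p) ℂ)
    (hind : ∀ i : Fin n, ∃ j : Fin s,
      f j = (X (Sum.inl i)) ^ 2 - X (Sum.inl i))
    (m : ℕ)
    (hinf : ¬ ∃ z : (Fin n ⊕ Fin p) → ℂ,
      eval z ((∑ i : Fin n, X (Sum.inl i)) -
        (m : MvPolynomial (Fin n ⊕ Fin p) ℂ)) = 0 ∧
      ∀ j : Fin s, eval z (f j) = 0)
    (hclosed : SubsetClosed n p s f) :
    ∃ (β₁ : MvPolynomial (Fin n ⊕ Fin p) ℂ)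
      (β : Fin s → MvPolynomial (Fin n ⊕ Fin p) ℂ),
      β₁ * ((∑ i : Fin n, X (Sum.inl i)) -
          (m : MvPolynomial (Fin n ⊕ Fin p) ℂ)) +
        (∑ j : Fin s, β j * f j) = 1 ∧
      ∀ d : (Fin n ⊕ Fin p) →₀ ℕ,
        d ∈ β₁.support ↔
          ∃ b : Finset (Fin n), InB n p s f b ∧
            d = ∑ i ∈ b, Finsupp.single (Sum.inl i) 1 := by
  classical
  set β₁ := ∑ b with InB n p s f b,
    monomial (∑ i ∈ b, Finsupp.single (Sum.inl i) 1) (certCoeff (m : ℂ) #b)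
  have hcert := (mkₐ_sum_monomial_certCoeff_mul_eq_one hind hclosed.2 hinf).symm
  rw [Ideal.Quotient.mkₐ_eq_mk, ← map_one (Ideal.Quotient.mk _), Ideal.Quotient.eq] at hcert
  obtain ⟨β, hβ⟩ := Ideal.mem_span_range_iff_exists_fun.1 hcert
  refine ⟨β₁, β, by rw [hβ]; ring, fun d => ?_⟩
  rw [mem_support_sum_monomial_iff (sum_single_one_injective Sum.inl_injective).injOn
    fun b hb => certCoeff_ne_zero_iff.2 (card_lt_of_inB hclosed.2 hinf (mem_filter.1 hb).2)]
  simp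

/-- Let `f₁ = (∑ yᵢ) − m` with `m > 0`.  If the full system
`f₁,…,f_s` has no common zero, the system `f₂,…,f_s` is subset closed and the
quotient by `⟨f₂,…,f_s⟩` is Artinian, then there is a Nullstellensatz
certificate `β₁·f₁ + ∑ βⱼ·fⱼ = 1` in which the monomials appearing in `β₁`
are precisely the squarefree monomials `y_b` for `b ∈ B`. -/
theorem stmt6 (n p s : ℕ) (f : Fin s → MvPolynomial (Fin n ⊕ Fin p) ℂ)
    (hind : ∀ i : Fin n, ∃ j : Fin s,
      f j = (X (Sum.inl i)) ^ 2 - X (Sum.inl i))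
    (m : ℕ) (hm : 0 < m)
    (hinf : ¬ ∃ z : (Fin n ⊕ Fin p) → ℂ,
      eval z ((∑ i : Fin n, X (Sum.inl i)) -
        (m : MvPolynomial (Fin n ⊕ Fin p) ℂ)) = 0 ∧
      ∀ j : Fin s, eval z (f j) = 0)
    (hclosed : SubsetClosed n p s f)
    (hart : IsArtinianRing
      (MvPolynomial (Fin n ⊕ Fin p) ℂ ⧸ Ideal.span (Set.range f))) :
    ∃ (β₁ : MvPolynomial (Fin n ⊕ Fin p) ℂ)
      (β : Fin s → MvPolynomial (Fin n ⊕ Fin p) ℂ),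
      β₁ * ((∑ i : Fin n, X (Sum.inl i)) -
          (m : MvPolynomial (Fin n ⊕ Fin p) ℂ)) +
        (∑ j : Fin s, β j * f j) = 1 ∧
      ∀ d : (Fin n ⊕ Fin p) →₀ ℕ,
        d ∈ β₁.support ↔
          ∃ b : Finset (Fin n), InB n p s f b ∧
            d = ∑ i ∈ b, Finsupp.single (Sum.inl i) 1 :=
  stmt6_general n p s f hind m hinf hclosed
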